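/- arXiv:1710.06623 — 3 statements merged into one kernel-verified Lean document; each statement's English description precedes it below -/
import Mathlib

section
/- Let f : ℝ^m → ℝ ∪ {∞} be proper, convex, lsc, λ > 0 and v ∈ ℝ^m. If z* is the proximal point z* = P_λ f(v) (i.e., z* minimizes z ↦ f(z) + (1/(2λ))‖z − v‖²), then the Moreau envelope e_λ f is differentiable at v with ∇e_λ f(v) = (1/λ)(v − z*). -/
/-! Testing the minimality of `zstar` against points `(1 - t) • zstar + t • z` and letting
`t → 0` shows, by convexity, that `(v - zstar) / lam` is a subgradient of `f` at `zstar`.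
This affine minorant of `f` makes `w ↦ e(v) + ⟪(v - zstar) / lam, w - v⟫` a lower bound for the
envelope `e`, while using the candidate `zstar` in the infimum defining `e w` gives the same
affine function plus `‖w - v‖ ^ 2 / (2 * lam)` as an upper bound. A function squeezed between
an affine function and that function plus a quadratic is differentiable, with the affine slope
as gradient. -/

open RealInnerProductSpace Set Filter Topology

/-- Moreau envelope of an extended-real-valued function. -/
noncomputable def moreau {E : Type*} [NormedAddCommGroup E]
    (lam : ℝ) (f : E → EReal) (v : E) : EReal :=
  ⨅ z : E, f z + ((1 / (2 * lam) * ‖z - v‖ ^ 2 : ℝ) : EReal)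

lemma EReal.toReal_mem_Icc {x : EReal} {a b : ℝ} (h : x ∈ Icc (a : EReal) b) :
    x.toReal ∈ Icc a b := by
  obtain ⟨ha, hb⟩ := h
  induction x with
  | bot => simp at ha
  | coe x => exact ⟨by exact_mod_cast ha, by exact_mod_cast hb⟩
  | top => simp at hb

lemma le_of_forall_mem_Ioc_le_add_mul {a b c : ℝ} (h : ∀ t ∈ Ioc (0 : ℝ) 1, a ≤ b + t * c) :
    a ≤ b := by
  have hlim : Tendsto (fun t : ℝ => b + t * c) (𝓝[>] 0) (𝓝 b) := by
    have : Continuous fun t : ℝ => b + t * c := by fun_prop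
    simpa using (this.tendsto 0).mono_left nhdsWithin_le_nhds
  exact ge_of_tendsto hlim (eventually_of_mem (Ioc_mem_nhdsGT one_pos) h)

section

variable {E : Type*} [NormedAddCommGroup E] {lam : ℝ} {f : E → EReal} {v zstar : E}

lemma prox_value_ne_top (hproper : ∃ z, f z ≠ ⊤)
    (hmin : ∀ z, f zstar + ((1 / (2 * lam) * ‖zstar - v‖ ^ 2 : ℝ) : EReal)
      ≤ f z + ((1 / (2 * lam) * ‖z - v‖ ^ 2 : ℝ) : EReal)) :
    f zstar ≠ ⊤ := by
  obtain ⟨z, hz⟩ := hproper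
  intro htop
  have hz_top := hmin z
  rw [htop, EReal.top_add_coe, top_le_iff] at hz_top
  exact (EReal.add_lt_top hz (EReal.coe_ne_top _)).ne hz_top

lemma moreau_le (w z : E) : moreau lam f w ≤ f z + ((1 / (2 * lam) * ‖z - w‖ ^ 2 : ℝ) : EReal) :=
  iInf_le (fun z => f z + ((1 / (2 * lam) * ‖z - w‖ ^ 2 : ℝ) : EReal)) z

variable [InnerProductSpace ℝ E]

theorem hasGradientAt_of_quadratic_sandwich [CompleteSpace E] {φ : E → ℝ} {g v : E} {c C : ℝ}
    (h : ∀ w, φ w ∈ Icc (c + ⟪g, w - v⟫) (c + ⟪g, w - v⟫ + C * ‖w - v‖ ^ 2)) :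
    HasGradientAt φ g v := by
  have hv : φ v = c := by simpa using h v
  rw [hasGradientAt_iff_isLittleO]
  refine (Asymptotics.IsBigO.of_bound C (Eventually.of_forall fun w => ?_)).trans_isLittleO
    (Asymptotics.isLittleO_pow_sub_sub v one_lt_two)
  obtain ⟨hlo, hup⟩ := h w
  rw [Real.norm_eq_abs, Real.norm_of_nonneg (by positivity), abs_le, hv]
  constructor <;> linarith

lemma prox_subgradient (hlam : 0 < lam) (hne_bot : ∀ z, f z ≠ ⊥)
    (hconv : ∀ x y : E, ∀ a b : ℝ, 0 ≤ a → 0 ≤ b → a + b = 1 →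
      f (a • x + b • y) ≤ (a : EReal) * f x + (b : EReal) * f y)
    (hmin : ∀ z, f zstar + ((1 / (2 * lam) * ‖zstar - v‖ ^ 2 : ℝ) : EReal)
      ≤ f z + ((1 / (2 * lam) * ‖z - v‖ ^ 2 : ℝ) : EReal))
    {M : ℝ} (hM : f zstar = M) (z : E) :
    ((M + ⟪(1 / lam) • (v - zstar), z - zstar⟫ : ℝ) : EReal) ≤ f z := by
  by_cases hz : f z = ⊤
  · simp [hz]
  obtain ⟨F, hF⟩ : ∃ F : ℝ, f z = F := ⟨_, (EReal.coe_toReal hz (hne_bot z)).symm⟩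
  rw [hF, EReal.coe_le_coe_iff]
  refine le_of_forall_mem_Ioc_le_add_mul (c := 1 / (2 * lam) * ‖z - zstar‖ ^ 2)
    fun t ⟨ht0, ht1⟩ => ?_
  -- minimality of `zstar` against `(1 - t) • zstar + t • z`, divided by `t`, as `t → 0`
  have hseg := hconv zstar z (1 - t) t (by linarith) ht0.le (by ring)
  have hcomb := (hmin _).trans (add_le_add_left hseg _)
  rw [hM, hF] at hcomb
  norm_cast at hcomb
  have hpt : (1 - t) • zstar + t • z - v = (zstar - v) + t • (z - zstar) := by module
  have hinner : ⟪zstar - v, z - zstar⟫ = -⟪v - zstar, z - zstar⟫ := by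
    rw [← inner_neg_left, neg_sub]
  rw [hpt, norm_add_sq_real, inner_smul_right, norm_smul, mul_pow, Real.norm_eq_abs, sq_abs,
    hinner] at hcomb
  rw [inner_smul_left, RCLike.conj_to_real]
  have key : t * (M + 1 / lam * ⟪v - zstar, z - zstar⟫)
      ≤ t * (F + t * (1 / (2 * lam) * ‖z - zstar‖ ^ 2)) := by
    field_simp at hcomb ⊢
    nlinarith
  exact le_of_mul_le_mul_left key ht0

lemma prox_quadratic_eq (hlam : lam ≠ 0) (w : E) :
    1 / (2 * lam) * ‖zstar - w‖ ^ 2 = 1 / (2 * lam) * ‖zstar - v‖ ^ 2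
      + ⟪(1 / lam) • (v - zstar), w - v⟫ + 1 / (2 * lam) * ‖w - v‖ ^ 2 := by
  have hsplit : zstar - w = (zstar - v) - (w - v) := by abel
  have hinner : ⟪v - zstar, w - v⟫ = -⟪zstar - v, w - v⟫ := by rw [← inner_neg_left, neg_sub]
  rw [hsplit, norm_sub_sq_real, inner_smul_left, RCLike.conj_to_real, hinner]
  field_simp
  ring

lemma prox_quadratic_le (hlam : 0 < lam) (z w : E) :
    1 / (2 * lam) * ‖zstar - v‖ ^ 2 + ⟪(1 / lam) • (v - zstar), w - v⟫
      ≤ ⟪(1 / lam) • (v - zstar), z - zstar⟫ + 1 / (2 * lam) * ‖z - w‖ ^ 2 := by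
  -- the gap is `‖(z - w) - (zstar - v)‖ ^ 2 / (2 * lam)`
  set a := z - zstar - (w - v)
  have hsplit : z - w = a + (zstar - v) := by simp only [a]; abel
  have hinner : ⟪v - zstar, z - zstar⟫ - ⟪v - zstar, w - v⟫ = -⟪a, zstar - v⟫ := by
    rw [← inner_sub_right, real_inner_comm, ← inner_neg_right, neg_sub]
  rw [hsplit, norm_add_sq_real, inner_smul_left, inner_smul_left, RCLike.conj_to_real]
  have hgap : 0 ≤ 1 / (2 * lam) * ‖a‖ ^ 2 := by positivity
  have hlin : 1 / lam * ⟪v - zstar, z - zstar⟫ - 1 / lam * ⟪v - zstar, w - v⟫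
      = -(1 / lam) * ⟪a, zstar - v⟫ := by rw [← mul_sub, hinner]; ring
  field_simp at hlin hgap ⊢
  nlinarith

lemma moreau_mem_Icc (hlam : 0 < lam) {M : ℝ} (hM : f zstar = M)
    (hsub : ∀ z, ((M + ⟪(1 / lam) • (v - zstar), z - zstar⟫ : ℝ) : EReal) ≤ f z) (w : E) :
    moreau lam f w ∈ Icc
      ((M + 1 / (2 * lam) * ‖zstar - v‖ ^ 2 + ⟪(1 / lam) • (v - zstar), w - v⟫ : ℝ) : EReal)
      ((M + 1 / (2 * lam) * ‖zstar - v‖ ^ 2 + ⟪(1 / lam) • (v - zstar), w - v⟫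
        + 1 / (2 * lam) * ‖w - v‖ ^ 2 : ℝ) : EReal) := by
  constructor
  · refine le_iInf fun z => le_trans ?_ (add_le_add_left (hsub z) _)
    rw [← EReal.coe_add, EReal.coe_le_coe_iff, add_assoc, add_assoc]
    linarith [prox_quadratic_le (v := v) (zstar := zstar) hlam z w]
  · refine (moreau_le w zstar).trans_eq ?_
    rw [hM, ← EReal.coe_add, prox_quadratic_eq hlam.ne' w]
    ring_nf

end

theorem stmt4_general {m : ℕ} (lam : ℝ) (hlam : 0 < lam)
    (f : EuclideanSpace ℝ (Fin m) → EReal)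
    (hne_bot : ∀ z, f z ≠ ⊥) (hproper : ∃ z, f z ≠ ⊤)
    (hconv : ∀ x y : EuclideanSpace ℝ (Fin m), ∀ a b : ℝ,
      0 ≤ a → 0 ≤ b → a + b = 1 →
      f (a • x + b • y) ≤ (a : EReal) * f x + (b : EReal) * f y)
    (v zstar : EuclideanSpace ℝ (Fin m))
    (hmin : ∀ z, f zstar + ((1 / (2 * lam) * ‖zstar - v‖ ^ 2 : ℝ) : EReal)
      ≤ f z + ((1 / (2 * lam) * ‖z - v‖ ^ 2 : ℝ) : EReal)) :
    HasGradientAt (fun w => (moreau lam f w).toReal) ((1 / lam) • (v - zstar)) v := by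
  obtain ⟨M, hM⟩ : ∃ M : ℝ, f zstar = M :=
    ⟨_, (EReal.coe_toReal (prox_value_ne_top hproper hmin) (hne_bot zstar)).symm⟩
  have hsub := prox_subgradient hlam hne_bot hconv hmin hM
  exact hasGradientAt_of_quadratic_sandwich fun w =>
    EReal.toReal_mem_Icc (moreau_mem_Icc hlam hM hsub w)

theorem stmt4 {m : ℕ} (lam : ℝ) (hlam : 0 < lam)
    (f : EuclideanSpace ℝ (Fin m) → EReal)
    (hne_bot : ∀ z, f z ≠ ⊥) (hproper : ∃ z, f z ≠ ⊤)
    (hlsc : LowerSemicontinuous f)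
    (hconv : ∀ x y : EuclideanSpace ℝ (Fin m), ∀ a b : ℝ,
      0 ≤ a → 0 ≤ b → a + b = 1 →
      f (a • x + b • y) ≤ (a : EReal) * f x + (b : EReal) * f y)
    (v zstar : EuclideanSpace ℝ (Fin m))
    (hmin : ∀ z, f zstar + ((1 / (2 * lam) * ‖zstar - v‖ ^ 2 : ℝ) : EReal)
      ≤ f z + ((1 / (2 * lam) * ‖z - v‖ ^ 2 : ℝ) : EReal)) :
    HasGradientAt (fun w => (moreau lam f w).toReal) ((1 / lam) • (v - zstar)) v :=
  stmt4_general lam hlam f hne_bot hproper hconv v zstar hmin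
end

section
/- Let λ, ρ > 0 and y, y⁺, r ∈ ℝ^m satisfy (1/ρ)(y⁺ − y) + λ y⁺ = r. Then (ρ/2)‖r − λ y⁺‖² − (ρ/2)‖r − λ y‖² = −((ρλ² + 2λ)/2)‖y⁺ − y‖². -/
theorem stmt8 {m : ℕ} (lam ρ : ℝ) (hlam : 0 < lam) (hρ : 0 < ρ)
    (y yplus r : EuclideanSpace ℝ (Fin m))
    (hrel : (1 / ρ) • (yplus - y) + lam • yplus = r) :
    (ρ / 2) * ‖r - lam • yplus‖ ^ 2 - (ρ / 2) * ‖r - lam • y‖ ^ 2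
      = -((ρ * lam ^ 2 + 2 * lam) / 2) * ‖yplus - y‖ ^ 2 := by
  have h1 : r - lam • yplus = (1 / ρ) • (yplus - y) := by rw [← hrel]; module
  have h2 : r - lam • y = (1 / ρ + lam) • (yplus - y) := by rw [← hrel]; module
  rw [h1, h2, norm_smul, norm_smul]
  have hρ' : ρ ≠ 0 := ne_of_gt hρ
  rw [Real.norm_eq_abs, Real.norm_eq_abs, mul_pow, mul_pow, sq_abs, sq_abs]
  field_simp
  ring
end

section
/- Let f_i : ℝ^m → ℝ be finitely many continuously differentiable functions and f = min_{i∈I} f_i. Fix v with active set A_f(v), and suppose there exists a direction d ∈ ℝ^m and index i ∈ A_f(v) with ⟨∇f_i(v), d⟩ < ⟨∇f_j(v), d⟩ for all j ∈ A_f(v) \ {i}. Then for all sufficiently small τ > 0, the active set of f at v + τd is exactly {i}, i.e., f(v+τd) = f_i(v+τd) < f_j(v+τd) for all j ∈ I \ {i}. -/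
/-!
Along the ray `τ ↦ v + τ • d`, each `fI j` has derivative `⟪∇fI j v, d⟫` at `τ = 0`.
An inactive index starts strictly above `fI i` and stays there by continuity; an active one
starts level with `fI i` but moves away strictly faster, so it lies above `fI i` for small
`τ > 0`. Finitely many such conditions hold simultaneously, and then `fI i` is the minimum.
-/

open Filter Topology Set
open scoped InnerProductSpace

theorem HasDerivAt.eventually_nhdsGT_lt {g h : ℝ → ℝ} {g' h' a : ℝ}
    (hg : HasDerivAt g g' a) (hh : HasDerivAt h h' a) (hle : g a ≤ h a)
    (hderiv : g a = h a → g' < h') : ∀ᶠ t in 𝓝[>] a, g t < h t := by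
  rcases hle.lt_or_eq with hlt | heq
  · exact nhdsWithin_le_nhds (hg.continuousAt.eventually_lt hh.continuousAt hlt)
  · have hslope : ∀ᶠ t in 𝓝[>] a, 0 < slope (h - g) a t :=
      nhdsWithin_mono a (fun _ ht => ne_of_gt ht)
        ((hasDerivAt_iff_tendsto_slope.mp (hh.sub hg)).eventually
          (eventually_gt_nhds (sub_pos.2 (hderiv heq))))
    filter_upwards [hslope, self_mem_nhdsWithin] with t hpos (ht : a < t)
    rw [slope_def_field, Pi.sub_apply, Pi.sub_apply, heq, sub_self, sub_zero] at hpos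
    exact sub_pos.1 ((div_pos_iff_of_pos_right (sub_pos.2 ht)).1 hpos)

theorem DifferentiableAt.hasDerivAt_comp_add_smul {E : Type*} [NormedAddCommGroup E]
    [InnerProductSpace ℝ E] [CompleteSpace E] {F : E → ℝ} {v : E}
    (hF : DifferentiableAt ℝ F v) (d : E) :
    HasDerivAt (fun t : ℝ => F (v + t • d)) ⟪gradient F v, d⟫_ℝ 0 := by
  have h := hF.hasGradientAt.hasFDerivAt.hasLineDerivAt d
  rwa [InnerProductSpace.toDual_apply_apply] at h

theorem ciInf_eq_of_forall_le {α ι : Type*} [ConditionallyCompleteLattice α] {g : ι → α} {i : ι}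
    (h : ∀ j, g i ≤ g j) : ⨅ j, g j = g i :=
  have : Nonempty ι := ⟨i⟩
  le_antisymm (ciInf_le ⟨g i, forall_mem_range.2 h⟩ i) (le_ciInf h)

theorem stmt17_general {m : ℕ} {ι : Type*} [Fintype ι]
    (fI : ι → EuclideanSpace ℝ (Fin m) → ℝ)
    (hC1 : ∀ i, ContDiff ℝ 1 (fI i))
    (f : EuclideanSpace ℝ (Fin m) → ℝ)
    (hf : ∀ w, f w = ⨅ j, fI j w)
    (v d : EuclideanSpace ℝ (Fin m)) (i : ι)
    (hi : fI i v = f v)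
    (hdir : ∀ j, fI j v = f v → j ≠ i →
      (inner ℝ (gradient (fI i) v) d : ℝ) < (inner ℝ (gradient (fI j) v) d : ℝ)) :
    ∃ τ₀ > (0 : ℝ), ∀ τ : ℝ, 0 < τ → τ < τ₀ →
      f (v + τ • d) = fI i (v + τ • d) ∧
      ∀ j, j ≠ i → fI i (v + τ • d) < fI j (v + τ • d) := by
  have hray : ∀ k, HasDerivAt (fun τ : ℝ => fI k (v + τ • d))
      (inner ℝ (gradient (fI k) v) d) 0 :=
    fun k => ((hC1 k).contDiffAt.differentiableAt one_ne_zero).hasDerivAt_comp_add_smul d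
  have hmin : ∀ j, fI i v ≤ fI j v := fun j =>
    hi ▸ (hf v).symm ▸ ciInf_le (finite_range _).bddBelow j
  have hsep : ∀ᶠ τ in 𝓝[>] (0 : ℝ), ∀ j, j ≠ i → fI i (v + τ • d) < fI j (v + τ • d) := by
    refine eventually_all.2 fun j => ?_
    by_cases hj : j = i
    · exact Eventually.of_forall fun _ hne => absurd hj hne
    · refine ((hray i).eventually_nhdsGT_lt (hray j) (by simpa using hmin j) fun heq => ?_).mono
        fun _ hlt _ => hlt
      exact hdir j (by simpa [hi] using heq.symm) hj
  obtain ⟨τ₀, hτ₀, hsmall⟩ := (nhdsGT_basis (0 : ℝ)).eventually_iff.1 hsep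
  refine ⟨τ₀, hτ₀, fun τ hpos hlt => ⟨?_, hsmall ⟨hpos, hlt⟩⟩⟩
  refine (hf _).trans (ciInf_eq_of_forall_le fun j => ?_)
  rcases eq_or_ne j i with rfl | hj
  exacts [le_rfl, (hsmall ⟨hpos, hlt⟩ j hj).le]

theorem stmt17 {m : ℕ} {ι : Type*} [Fintype ι] [Nonempty ι]
    (fI : ι → EuclideanSpace ℝ (Fin m) → ℝ)
    (hC1 : ∀ i, ContDiff ℝ 1 (fI i))
    (f : EuclideanSpace ℝ (Fin m) → ℝ)
    (hf : ∀ w, f w = ⨅ j, fI j w)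
    (v d : EuclideanSpace ℝ (Fin m)) (i : ι)
    (hi : fI i v = f v)
    (hdir : ∀ j, fI j v = f v → j ≠ i →
      (inner ℝ (gradient (fI i) v) d : ℝ) < (inner ℝ (gradient (fI j) v) d : ℝ)) :
    ∃ τ₀ > (0 : ℝ), ∀ τ : ℝ, 0 < τ → τ < τ₀ →
      f (v + τ • d) = fI i (v + τ • d) ∧
      ∀ j, j ≠ i → fI i (v + τ • d) < fI j (v + τ • d) :=
  stmt17_general fI hC1 f hf v d i hi hdir
end
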